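/- arXiv:1711.03057 — 9 statements merged into one kernel-verified Lean document; each statement's English description precedes it below -/
import Mathlib

section
/- Let p be an odd prime. If m, u, v ≥ 1 are integers, n ∈ ℤ, and u ≡ v (mod (p−1)·p^{m−1}), then M_{u,n} ≡ M_{v,n} (mod p^m). -/
/-!
`M_{u,n}` is the coefficient of `x^n` in `(1 + x)^u`, computed in the group ring `ℤ[C_{p-1}]`
where `x^{p-1} = 1`. Modulo `p`, `(1 + x)^{p-1} ≡ ∑_{k<p} (-x)^k`, and since `p` is odd
`(1 + x) ∑_{k<p} (-x)^k = 1 + x^p = 1 + x`. So once `u ≥ 1`, multiplying `(1 + x)^u` by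
`(1 + x)^{p-1}` is multiplying it by some `y ≡ 1 (mod p)`, and `y^{p^{m-1}} ≡ 1 (mod p^m)`.
-/

/-- `Mfun p u n = ∑_{i ∈ ℤ} C(u, i(p-1)+n)`, written as a finite sum over the
potential values `k = i(p-1)+n` with `0 ≤ k ≤ u`. -/
def Mfun (p u : ℕ) (n : ℤ) : ℤ :=
  ∑ k ∈ Finset.range (u + 1), if ((p : ℤ) - 1) ∣ ((k : ℤ) - n) then (u.choose k : ℤ) else 0

open Finset

theorem Nat.Prime.intCast_choose_pred_modEq {p k : ℕ} (hp : p.Prime) (hk : k < p) :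
    ((p - 1).choose k : ℤ) ≡ (-1) ^ k [ZMOD p] := by
  induction k with
  | zero => simp
  | succ k ih =>
    have hpascal : ((p - 1).choose (k + 1) : ℤ) = p.choose (k + 1) - (p - 1).choose k := by
      rw [Nat.choose_eq_choose_pred_add hp.pos k.succ_pos]
      push_cast
      ring
    have hdvd : (p : ℤ) ∣ p.choose (k + 1) := by
      exact_mod_cast hp.dvd_choose_self k.succ_ne_zero hk
    calc ((p - 1).choose (k + 1) : ℤ) = p.choose (k + 1) - (p - 1).choose k := hpascal
      _ ≡ 0 - (-1) ^ k [ZMOD p] := (Int.modEq_zero_iff_dvd.2 hdvd).sub (ih (by omega))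
      _ = (-1) ^ (k + 1) := by ring

section CommRing

variable {R : Type*} [CommRing R] {p : ℕ}

theorem Nat.Prime.natCast_dvd_one_add_pow_pred_sub_geom_sum (hp : p.Prime) (x : R) :
    (p : R) ∣ (1 + x) ^ (p - 1) - ∑ k ∈ range p, (-x) ^ k := by
  have hp1 : p - 1 + 1 = p := Nat.sub_add_cancel hp.one_le
  rw [add_comm, add_pow, hp1, ← sum_sub_distrib]
  refine dvd_sum fun k hk => ?_
  have hchoose :=
    map_dvd (Int.castRingHom R) (hp.intCast_choose_pred_modEq (mem_range.1 hk)).symm.dvd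
  simp only [map_sub, map_pow, map_neg, map_one, map_natCast] at hchoose
  rw [one_pow, mul_one, neg_pow, mul_comm (x ^ k), ← sub_mul]
  exact hchoose.mul_right _

theorem one_add_mul_geom_sum_neg {x : R} (hodd : Odd p) (hx : x ^ (p - 1) = 1) :
    (1 + x) * ∑ k ∈ range p, (-x) ^ k = 1 + x := by
  have hxp : x ^ p = x := by
    rw [← Nat.sub_add_cancel hodd.pos, pow_succ, hx, one_mul]
  rw [← sub_neg_eq_add 1 x, mul_neg_geom_sum, hodd.neg_pow, hxp, sub_neg_eq_add]

theorem exists_one_add_pow_add_pred_mul (hp : p.Prime) (hodd : Odd p) {x : R}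
    (hx : x ^ (p - 1) = 1) :
    ∃ y : R, (p : R) ∣ y - 1 ∧
      ∀ u, 1 ≤ u → ∀ k, (1 + x) ^ (u + (p - 1) * k) = (1 + x) ^ u * y ^ k := by
  obtain ⟨r, hr⟩ := hp.natCast_dvd_one_add_pow_pred_sub_geom_sum x
  refine ⟨1 + p * r, ⟨r, by ring⟩, fun u hu k => ?_⟩
  have hstep : (1 + x) ^ u * (1 + x) ^ (p - 1) = (1 + x) ^ u * (1 + p * r) := by
    obtain ⟨w, rfl⟩ : ∃ w, u = w + 1 := ⟨u - 1, by omega⟩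
    rw [sub_eq_iff_eq_add'] at hr
    calc (1 + x) ^ (w + 1) * (1 + x) ^ (p - 1)
        = (1 + x) ^ w * ((1 + x) * ∑ k ∈ range p, (-x) ^ k) + (1 + x) ^ (w + 1) * (p * r) := by
          rw [hr]; ring
      _ = (1 + x) ^ (w + 1) * (1 + p * r) := by
          rw [one_add_mul_geom_sum_neg hodd hx]; ring
  induction k with
  | zero => simp
  | succ k ih =>
    rw [mul_add, mul_one, ← add_assoc, pow_add, ih, mul_right_comm, hstep]
    ring

theorem natCast_pow_succ_dvd_pow_mul_sub_one {y : R} (hy : (p : R) ∣ y - 1) (j t : ℕ) :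
    (p : R) ^ (j + 1) ∣ y ^ (p ^ j * t) - 1 := by
  have h := dvd_sub_pow_of_dvd_sub hy j
  rw [one_pow] at h
  rw [pow_mul]
  simpa using h.trans (sub_dvd_pow_sub_pow _ 1 t)

theorem natCast_pow_dvd_one_add_pow_sub (hp : p.Prime) (hodd : Odd p) {x : R}
    (hx : x ^ (p - 1) = 1) {u : ℕ} (hu : 1 ≤ u) (m t : ℕ) :
    (p : R) ^ m ∣ (1 + x) ^ (u + (p - 1) * p ^ (m - 1) * t) - (1 + x) ^ u := by
  obtain ⟨y, hy, hpow⟩ := exists_one_add_pow_add_pred_mul hp hodd hx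
  cases m with
  | zero => simp
  | succ j =>
    rw [mul_assoc, hpow u hu, Nat.add_sub_cancel, ← mul_sub_one]
    exact (natCast_pow_succ_dvd_pow_mul_sub_one hy j t).mul_left _

end CommRing

namespace AddMonoidAlgebra

theorem natCast_dvd_coeff {k G : Type*} [Semiring k] [AddMonoid G] {c : ℕ} {f : k[G]}
    (h : (c : k[G]) ∣ f) (g : G) : (c : k) ∣ f.coeff g := by
  obtain ⟨w, rfl⟩ := h
  rw [natCast_def, coeff_single_zero_mul]
  exact dvd_mul_right _ _

noncomputable def cyclicGen (n : ℕ) : ℤ[ZMod n] := single 1 1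

theorem cyclicGen_pow (n k : ℕ) : cyclicGen n ^ k = single (k : ZMod n) 1 := by
  rw [cyclicGen, single_pow, one_pow, nsmul_one]

theorem cyclicGen_pow_self (n : ℕ) : cyclicGen n ^ n = 1 := by
  rw [cyclicGen_pow, ZMod.natCast_self, one_def]

theorem coeff_one_add_cyclicGen_pow (n u : ℕ) (j : ℤ) :
    ((1 + cyclicGen n) ^ u).coeff (j : ZMod n) =
      ∑ k ∈ range (u + 1), if (n : ℤ) ∣ k - j then (u.choose k : ℤ) else 0 := by
  classical
  rw [add_comm, add_pow, coeff_sum, Finsupp.finsetSum_apply]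
  refine sum_congr rfl fun k _ => ?_
  have hcong : (k : ZMod n) = j ↔ (n : ℤ) ∣ k - j := by
    rw [← Int.cast_natCast, eq_comm, ZMod.intCast_eq_intCast_iff_dvd_sub]
  rw [one_pow, mul_one, natCast_def, cyclicGen_pow, single_mul_single, add_zero, one_mul,
    coeff_single, Finsupp.single_apply]
  simp only [hcong]

end AddMonoidAlgebra

theorem Mfun_eq_coeff {p : ℕ} (hp : 1 ≤ p) (u : ℕ) (n : ℤ) :
    Mfun p u n = ((1 + AddMonoidAlgebra.cyclicGen (p - 1)) ^ u).coeff (n : ZMod (p - 1)) := by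
  rw [AddMonoidAlgebra.coeff_one_add_cyclicGen_pow, Mfun, Nat.cast_sub hp, Nat.cast_one]

open AddMonoidAlgebra in
theorem stmt_0_general (p : ℕ) (hp : p.Prime) (hodd : Odd p) (m u v : ℕ)
    (hu : 1 ≤ u) (hv : 1 ≤ v) (n : ℤ)
    (huv : (u : ℤ) ≡ (v : ℤ) [ZMOD ((p : ℤ) - 1) * (p : ℤ) ^ (m - 1)]) :
    Mfun p u n ≡ Mfun p v n [ZMOD (p : ℤ) ^ m] := by
  wlog hle : u ≤ v generalizing u v
  · exact (this v u hv hu huv.symm (by omega)).symm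
  have hmod : u ≡ v [MOD (p - 1) * p ^ (m - 1)] := by
    rw [← Int.natCast_modEq_iff]
    push_cast [Nat.cast_sub hp.one_le]
    exact huv
  obtain ⟨t, ht⟩ := (Nat.modEq_iff_dvd' hle).1 hmod
  obtain rfl : v = u + (p - 1) * p ^ (m - 1) * t := by omega
  have hdvd := natCast_pow_dvd_one_add_pow_sub hp hodd (cyclicGen_pow_self (p - 1)) hu m t
  rw [← Nat.cast_pow] at hdvd
  have hcoeff := natCast_dvd_coeff hdvd (n : ZMod (p - 1))
  rw [coeff_sub, Finsupp.sub_apply, Nat.cast_pow] at hcoeff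
  rw [Int.modEq_iff_dvd, Mfun_eq_coeff hp.one_le, Mfun_eq_coeff hp.one_le]
  exact hcoeff

theorem stmt_0 (p : ℕ) (hp : p.Prime) (hodd : Odd p) (m u v : ℕ) (hm : 1 ≤ m)
    (hu : 1 ≤ u) (hv : 1 ≤ v) (n : ℤ)
    (huv : (u : ℤ) ≡ (v : ℤ) [ZMOD ((p : ℤ) - 1) * (p : ℤ) ^ (m - 1)]) :
    Mfun p u n ≡ Mfun p v n [ZMOD (p : ℤ) ^ m] :=
  stmt_0_general p hp hodd m u v hu hv n huv
end

section
/- Let p be an odd prime and let u ≥ 1 be an integer, written as u = t(p−1)+s with s ∈ {1,…,p−1} and t ≥ 0. Then the p-adic valuation of the integer s·M_u − s·(1 + δ_{s=p−1}) − t·p is at least v_p(t) + 2, where δ_{s=p−1} equals 1 if s = p−1 and 0 otherwise (equivalently, M_u = 1 + δ_{s=p−1} + (t/s)·p + O(t·p²) in ℤ_p). -/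
/-!
Work in `ZMod (p ^ (N + 1))` with the Teichmüller lift `ω a = ã ^ p ^ N`. Its values on `(ZMod p)ˣ`
are `p - 1` roots of unity with power sums `(p - 1)·[p - 1 ∣ k]`, so the binomial theorem gives
`(p - 1) M_m = ∑_a (1 + ω a) ^ m`. For `m ≥ 1` the term `a = -1` vanishes, and every other
`1 + ω a` is a unit, so `(1 + ω a) ^ (p - 1) = 1 + p λ`. Once `p ^ (N + 1) ∣ C(t, j) p ^ j` for
`j ≥ 2` (true for `N + 1 = v_p(t) + 2` when `p ≥ 3`), `(1 + p λ) ^ t = 1 + t p λ`, whence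
`M_{t(p-1)+s} ≡ M_s + t (M_{p-1+s} - M_s) = 1 + δ + t C(p-1+s, p-1)`. Finally
`s C(p-1+s, p-1) = p C(p-1+s, p)`, and `C(p-1+s, p) ≡ 1 (mod p)` by Lucas' theorem.
-/

open Finset

theorem Finset.sum_range_succ_ite_dvd {M : Type*} [AddCommMonoid M] (d n : ℕ) (f : ℕ → M) :
    ∑ k ∈ range (n + 1), (if d ∣ k then f k else 0) = ∑ i ∈ range (n / d + 1), f (d * i) := by
  rcases Nat.eq_zero_or_pos d with rfl | hd
  · simp
  rw [← sum_filter, ← sum_image (fun i _ j _ h => Nat.eq_of_mul_eq_mul_left hd h)]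
  congr 1
  ext k
  simp only [mem_filter, mem_range, mem_image, Nat.lt_succ_iff]
  constructor
  · rintro ⟨hk, i, rfl⟩
    exact ⟨i, (Nat.le_div_iff_mul_le hd).2 (by linarith [mul_comm d i]), rfl⟩
  · rintro ⟨i, hi, rfl⟩
    exact ⟨by rw [Nat.le_div_iff_mul_le hd] at hi; linarith [mul_comm d i], dvd_mul_right d i⟩

theorem one_add_pow_eq_of_choose_mul_pow_eq_zero {R : Type*} [CommRing R] (x : R) (t : ℕ)
    (h : ∀ j, 2 ≤ j → (t.choose j : R) * x ^ j = 0) : (1 + x) ^ t = 1 + t * x := by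
  have hsum : (1 + x) ^ t = ∑ j ∈ range (2 + t), x ^ j * (t.choose j : R) := by
    rw [add_comm, add_pow, add_comm 2, sum_range_succ _ (t + 1), Nat.choose_succ_self]
    simp
  rw [hsum, sum_range_add, sum_eq_zero (s := range t) fun j _ => by rw [mul_comm, h _ (by omega)]]
  simp [sum_range_succ, mul_comm]

theorem pow_mul_add_eq_of_dvd_pow_sub_one {R : Type*} [CommRing R] {q x : R} {d t : ℕ} (s : ℕ)
    (hx : q ∣ x ^ d - 1) (ht : ∀ j, 2 ≤ j → (t.choose j : R) * q ^ j = 0) :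
    x ^ (t * d + s) = x ^ s + t * (x ^ (d + s) - x ^ s) := by
  obtain ⟨c, hc⟩ := hx
  have hpow : (x ^ d) ^ t = 1 + t * (q * c) := by
    rw [show x ^ d = 1 + q * c by linear_combination hc]
    exact one_add_pow_eq_of_choose_mul_pow_eq_zero _ _ fun j hj => by
      rw [mul_pow, ← mul_assoc, ht j hj, zero_mul]
  rw [pow_add, mul_comm t d, pow_mul, hpow, pow_add]
  linear_combination (-(t : R) * x ^ s) * hc

theorem MonoidHom.sum_eq_zero_of_isUnit_sub_one {G R : Type*} [Group G] [Fintype G] [CommRing R]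
    (f : G →* R) {g : G} (hg : IsUnit (f g - 1)) : ∑ x, f x = 0 := by
  have hshift : f g * ∑ x, f x = ∑ x, f x := by
    rw [mul_sum]
    exact Fintype.sum_equiv (Equiv.mulLeft g) _ _ fun x => (map_mul f g x).symm
  exact hg.mul_right_eq_zero.1 (by rw [sub_mul, one_mul, hshift, sub_self])

theorem padicValNat_le_padicValNat_choose_add {p t j : ℕ} [Fact p.Prime] (hj : j ≠ 0)
    (hjt : j ≤ t) : padicValNat p t ≤ padicValNat p (t.choose j) + padicValNat p j := by
  obtain ⟨t, rfl⟩ : ∃ t', t = t' + 1 := ⟨t - 1, by omega⟩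
  obtain ⟨j, rfl⟩ : ∃ j', j = j' + 1 := ⟨j - 1, by omega⟩
  have h := congrArg (padicValNat p) (Nat.add_one_mul_choose_eq t j)
  rw [padicValNat.mul (by omega) (Nat.choose_pos (by omega)).ne',
    padicValNat.mul (Nat.choose_pos hjt).ne' (by omega)] at h
  omega

theorem padicValNat_add_two_le {p j : ℕ} (hp : 3 ≤ p) (hj : 2 ≤ j) :
    padicValNat p j + 2 ≤ j := by
  rcases Nat.eq_zero_or_pos (padicValNat p j) with hw | hw
  · omega
  have hbern : 1 + padicValNat p j * 2 ≤ 3 ^ padicValNat p j := by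
    exact_mod_cast one_add_mul_le_pow (by norm_num : (-2 : ℤ) ≤ 2) _
  have := Nat.le_of_dvd (by omega) (pow_padicValNat_dvd : p ^ padicValNat p j ∣ j)
  have := Nat.pow_le_pow_left hp (padicValNat p j)
  omega

theorem pow_padicValNat_add_two_dvd_choose_mul_pow {p t j : ℕ} [Fact p.Prime] (hp : 3 ≤ p)
    (hj : 2 ≤ j) : p ^ (padicValNat p t + 2) ∣ t.choose j * p ^ j := by
  rcases le_or_gt j t with hjt | hjt
  · have := padicValNat_le_padicValNat_choose_add (p := p) (by omega) hjt
    have := padicValNat_add_two_le hp hj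
    calc p ^ (padicValNat p t + 2) ∣ p ^ (padicValNat p (t.choose j) + j) :=
          pow_dvd_pow p (by omega)
      _ = p ^ padicValNat p (t.choose j) * p ^ j := pow_add _ _ _
      _ ∣ t.choose j * p ^ j := mul_dvd_mul pow_padicValNat_dvd dvd_rfl
  · simp [Nat.choose_eq_zero_of_lt hjt]

theorem pow_two_dvd_mul_choose_sub {p s : ℕ} [Fact p.Prime] (hs : 1 ≤ s) (hsp : s ≤ p) :
    (p : ℤ) ^ 2 ∣ s * ((p - 1 + s).choose (p - 1) : ℤ) - p := by
  have hp := (Fact.out : p.Prime).one_lt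
  have hmul : (p - 1 + s).choose (p - 1) * s = (p - 1 + s).choose p * p := by
    have := Nat.choose_succ_right_eq (p - 1 + s) (p - 1)
    rwa [Nat.sub_add_cancel hp.le, Nat.add_sub_cancel_left, eq_comm] at this
  have hlucas : ((p - 1 + s).choose p : ℤ) ≡ 1 [ZMOD p] := by
    have := Choose.choose_modEq_choose_mod_mul_choose_div (n := s - 1 + p) (k := p) (p := p)
    rwa [Nat.add_div_right _ (by omega), Nat.add_mod_right, Nat.div_eq_of_lt (by omega),
      Nat.mod_eq_of_lt (by omega), Nat.mod_self, Nat.div_self (by omega), Nat.choose_zero_right,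
      Nat.choose_self, Nat.cast_one, one_mul, show s - 1 + p = p - 1 + s by omega] at this
  obtain ⟨c, hc⟩ := hlucas.symm.dvd
  refine ⟨c, ?_⟩
  rw [mul_comm, ← Nat.cast_mul, hmul]
  push_cast
  linear_combination (p : ℤ) * hc

theorem Mfun_zero_eq_sum_ite {p : ℕ} (hp : 1 ≤ p) (m : ℕ) :
    Mfun p m 0 = ∑ k ∈ range (m + 1), if p - 1 ∣ k then (m.choose k : ℤ) else 0 := by
  refine sum_congr rfl fun k _ => if_congr ?_ rfl rfl
  rw [sub_zero, ← Nat.cast_one, ← Nat.cast_sub hp, Int.natCast_dvd_natCast]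

theorem Mfun_zero_eq_sum_choose {p : ℕ} (hp : 1 ≤ p) (m : ℕ) :
    Mfun p m 0 = ∑ i ∈ range (m / (p - 1) + 1), (m.choose ((p - 1) * i) : ℤ) := by
  rw [Mfun_zero_eq_sum_ite hp, sum_range_succ_ite_dvd]

theorem Mfun_zero_of_le {p s : ℕ} (hp : 2 ≤ p) (hs : s ≤ p - 1) :
    Mfun p s 0 = 1 + if s = p - 1 then 1 else 0 := by
  rw [Mfun_zero_eq_sum_choose (by omega)]
  rcases hs.lt_or_eq with hs | rfl
  · simp [Nat.div_eq_of_lt hs, hs.ne]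
  · simp [Nat.div_self (by omega : 0 < p - 1), sum_range_succ]

theorem Mfun_zero_sub_one_add {p s : ℕ} (hp : 2 ≤ p) (hs : s ≤ p - 1) :
    Mfun p (p - 1 + s) 0 = Mfun p s 0 + ((p - 1 + s).choose (p - 1) : ℤ) := by
  rw [Mfun_zero_of_le hp hs, Mfun_zero_eq_sum_choose (by omega), Nat.add_div_left _ (by omega)]
  rcases hs.lt_or_eq with hs | rfl
  · simp [Nat.div_eq_of_lt hs, hs.ne, sum_range_succ]
  · simp only [Nat.div_self (by omega : 0 < p - 1), ← two_mul, mul_comm 2, one_mul, sum_range_succ,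
      range_one, sum_singleton, mul_zero, Nat.choose_zero_right, Nat.cast_one, mul_one,
      Nat.choose_self, ↓reduceIte]
    ring

namespace ZMod

theorem intCast_pow_prime_pow_eq {p : ℕ} (N : ℕ) {z w : ℤ} (h : (z : ZMod p) = w) :
    (z : ZMod (p ^ (N + 1))) ^ p ^ N = (w : ZMod (p ^ (N + 1))) ^ p ^ N := by
  have hdvd : (p : ZMod (p ^ (N + 1))) ∣ (z : ZMod (p ^ (N + 1))) - w := by
    have := (intCast_eq_intCast_iff_dvd_sub w z p).1 h.symm
    simpa using map_dvd (Int.castRingHom (ZMod (p ^ (N + 1)))) this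
  have := dvd_sub_pow_of_dvd_sub hdvd N
  rwa [← Nat.cast_pow, natCast_self, zero_dvd_iff, sub_eq_zero] at this

variable {p : ℕ} [Fact p.Prime] (N : ℕ)

def teichmullerLift : ZMod p →* ZMod (p ^ (N + 1)) where
  toFun a := ((a.val : ℤ) : ZMod (p ^ (N + 1))) ^ p ^ N
  map_one' := by simp [val_one]
  map_mul' a b := by
    rw [← mul_pow, ← Int.cast_mul]
    exact intCast_pow_prime_pow_eq N (by push_cast; simp)

theorem teichmullerLift_intCast (z : ℤ) :
    teichmullerLift N (z : ZMod p) = (z : ZMod (p ^ (N + 1))) ^ p ^ N :=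
  intCast_pow_prime_pow_eq N (by simp)

theorem teichmullerLift_neg_one (hp : Odd p) : teichmullerLift N (-1 : ZMod p) = -1 := by
  have := teichmullerLift_intCast (p := p) N (-1)
  push_cast at this
  rw [this, (hp.pow (n := N)).neg_one_pow]

theorem castHom_teichmullerLift (a : ZMod p) :
    castHom (dvd_pow_self p N.succ_ne_zero) (ZMod p) (teichmullerLift N a) = a := by
  obtain ⟨z, rfl⟩ := intCast_surjective a
  rw [teichmullerLift_intCast, map_pow, map_intCast, pow_card_pow]

theorem isUnit_of_castHom_ne_zero {r : ZMod (p ^ (N + 1))}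
    (h : castHom (dvd_pow_self p N.succ_ne_zero) (ZMod p) r ≠ 0) : IsUnit r := by
  rw [← natCast_zmod_val r] at h ⊢
  rw [map_natCast, Ne, natCast_eq_zero_iff] at h
  exact (isUnit_natCast_iff_not_dvd_pow Fact.out N.succ_pos).2 h

theorem natCast_dvd_of_castHom_eq_zero {r : ZMod (p ^ (N + 1))}
    (h : castHom (dvd_pow_self p N.succ_ne_zero) (ZMod p) r = 0) :
    (p : ZMod (p ^ (N + 1))) ∣ r := by
  rw [← natCast_zmod_val r] at h ⊢
  rw [map_natCast, natCast_eq_zero_iff] at h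
  exact map_dvd (Nat.castRingHom _) h

theorem sum_units_teichmullerLift_pow (k : ℕ) :
    ∑ a : (ZMod p)ˣ, teichmullerLift N (a : ZMod p) ^ k =
      if p - 1 ∣ k then ((p - 1 : ℕ) : ZMod (p ^ (N + 1))) else 0 := by
  split_ifs with hk
  · have hone : ∀ a : (ZMod p)ˣ, teichmullerLift N (a : ZMod p) ^ k = 1 := fun a => by
      obtain ⟨c, rfl⟩ := hk
      rw [← map_pow (teichmullerLift N), ← Units.val_pow_eq_pow_val, pow_mul,
        units_pow_card_sub_one_eq_one, one_pow, Units.val_one, map_one]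
    simp [hone, Nat.totient_prime Fact.out]
  · obtain ⟨g, hg⟩ := IsCyclic.exists_generator (α := (ZMod p)ˣ)
    have hgk : (g : ZMod p) ^ k ≠ 1 := by
      rw [← Units.val_pow_eq_pow_val, Ne, Units.val_eq_one, ← orderOf_dvd_iff_pow_eq_one,
        orderOf_eq_card_of_forall_mem_zpowers hg, Nat.card_eq_fintype_card, card_units]
      exact hk
    refine ((teichmullerLift N).comp (Units.coeHom (ZMod p)) ^ k).sum_eq_zero_of_isUnit_sub_one
      (g := g) (isUnit_of_castHom_ne_zero N ?_)
    rw [MonoidHom.pow_apply, MonoidHom.comp_apply, Units.coeHom_apply, map_sub, map_pow, map_one,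
      castHom_teichmullerLift, sub_ne_zero]
    exact hgk

theorem natCast_sub_one_mul_Mfun (m : ℕ) :
    ((p - 1 : ℕ) : ZMod (p ^ (N + 1))) * Mfun p m 0 =
      ∑ a : (ZMod p)ˣ, (teichmullerLift N (a : ZMod p) + 1) ^ m := by
  simp_rw [add_pow, one_pow, mul_one]
  rw [sum_comm]
  simp_rw [← sum_mul, sum_units_teichmullerLift_pow, ite_mul, zero_mul]
  rw [Mfun_zero_eq_sum_ite (Fact.out : p.Prime).one_lt.le, Int.cast_sum, mul_sum]
  refine sum_congr rfl fun k _ => ?_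
  split_ifs <;> simp [mul_comm]

theorem sum_erase_neg_one_teichmullerLift_add_one_pow (hp : Odd p) {m : ℕ} (hm : m ≠ 0) :
    ∑ a ∈ univ.erase (-1 : (ZMod p)ˣ), (teichmullerLift N (a : ZMod p) + 1) ^ m =
      ((p - 1 : ℕ) : ZMod (p ^ (N + 1))) * Mfun p m 0 := by
  rw [natCast_sub_one_mul_Mfun, sum_erase]
  simp [teichmullerLift_neg_one N hp, hm]

theorem natCast_dvd_teichmullerLift_add_one_pow_sub_one {a : ZMod p} (ha : a ≠ -1) :
    (p : ZMod (p ^ (N + 1))) ∣ (teichmullerLift N a + 1) ^ (p - 1) - 1 := by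
  apply natCast_dvd_of_castHom_eq_zero
  rw [map_sub, map_pow, map_add, map_one, castHom_teichmullerLift, pow_card_sub_one_eq_one,
    sub_self]
  exact fun h => ha (eq_neg_of_add_eq_zero_left h)

end ZMod

open ZMod in
theorem pow_succ_dvd_Mfun_mul_add_sub {p : ℕ} [Fact p.Prime] (N : ℕ) (hp : Odd p) {t s : ℕ} (hs : s ≠ 0)
    (ht : ∀ j, 2 ≤ j → p ^ (N + 1) ∣ t.choose j * p ^ j) :
    (p : ℤ) ^ (N + 1) ∣
      Mfun p (t * (p - 1) + s) 0 - Mfun p s 0 - t * (Mfun p (p - 1 + s) 0 - Mfun p s 0) := by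
  have hp2 := (Fact.out : p.Prime).two_le
  have hunit : IsUnit ((p - 1 : ℕ) : ZMod (p ^ (N + 1))) := by
    refine isUnit_of_castHom_ne_zero N ?_
    rw [map_natCast, Ne, natCast_eq_zero_iff]
    exact fun h => absurd (Nat.le_of_dvd (by omega) h) (by omega)
  have htR : ∀ j, 2 ≤ j → (t.choose j : ZMod (p ^ (N + 1))) * (p : ZMod (p ^ (N + 1))) ^ j = 0 :=
    fun j hj => by exact_mod_cast (natCast_eq_zero_iff _ _).2 (ht j hj)
  have hdvd : ∀ a ∈ univ.erase (-1 : (ZMod p)ˣ),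
      (p : ZMod (p ^ (N + 1))) ∣ (teichmullerLift N (a : ZMod p) + 1) ^ (p - 1) - 1 :=
    fun a ha => natCast_dvd_teichmullerLift_add_one_pow_sub_one N <| by
      simpa [← Units.val_neg, Units.val_eq_one] using (mem_erase.1 ha).1
  have hsum : ((p - 1 : ℕ) : ZMod (p ^ (N + 1))) * ((Mfun p (t * (p - 1) + s) 0 - Mfun p s 0
      - t * (Mfun p (p - 1 + s) 0 - Mfun p s 0) : ℤ) : ZMod (p ^ (N + 1))) = 0 := by
    push_cast
    rw [mul_sub, mul_sub, mul_left_comm, mul_sub,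
      ← sum_erase_neg_one_teichmullerLift_add_one_pow N hp hs,
      ← sum_erase_neg_one_teichmullerLift_add_one_pow N hp (by omega : t * (p - 1) + s ≠ 0),
      ← sum_erase_neg_one_teichmullerLift_add_one_pow N hp (by omega : p - 1 + s ≠ 0),
      sum_congr rfl fun a ha => pow_mul_add_eq_of_dvd_pow_sub_one s (hdvd a ha) htR,
      sum_add_distrib, ← mul_sum, sum_sub_distrib]
    ring
  have := (intCast_zmod_eq_zero_iff_dvd _ _).1 (hunit.mul_right_eq_zero.1 hsum)
  exact_mod_cast this

theorem stmt_1_general (p : ℕ) (hp : p.Prime) (hodd : Odd p) (u t s : ℕ)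
    (hs1 : 1 ≤ s) (hs2 : s ≤ p - 1) (hust : u = t * (p - 1) + s) :
    (t = 0 →
      (s : ℤ) * Mfun p u 0 - (s : ℤ) * (1 + if s = p - 1 then 1 else 0) - (t : ℤ) * p = 0) ∧
    (t ≠ 0 →
      ((p : ℤ) ^ (padicValNat p t + 2) ∣
        (s : ℤ) * Mfun p u 0 - (s : ℤ) * (1 + if s = p - 1 then 1 else 0) - (t : ℤ) * p)) := by
  have := Fact.mk hp
  have hp3 : 3 ≤ p := by obtain ⟨k, rfl⟩ := hodd; have := hp.two_le; omega
  subst hust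
  rw [← Mfun_zero_of_le hp.two_le hs2]
  refine ⟨fun ht => by simp [ht], fun _ => ?_⟩
  have hcong := pow_succ_dvd_Mfun_mul_add_sub (padicValNat p t + 1) hodd (by omega : s ≠ 0)
    fun j hj => pow_padicValNat_add_two_dvd_choose_mul_pow hp3 hj
  rw [Mfun_zero_sub_one_add hp.two_le hs2, add_sub_cancel_left] at hcong
  have hsplit : (s : ℤ) * Mfun p (t * (p - 1) + s) 0 - s * Mfun p s 0 - t * p =
      s * (Mfun p (t * (p - 1) + s) 0 - Mfun p s 0 - t * ((p - 1 + s).choose (p - 1) : ℤ)) +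
        t * (s * ((p - 1 + s).choose (p - 1) : ℤ) - p) := by ring
  rw [hsplit]
  refine dvd_add (dvd_mul_of_dvd_right hcong _) ?_
  rw [pow_add]
  exact mul_dvd_mul (by exact_mod_cast pow_padicValNat_dvd)
    (pow_two_dvd_mul_choose_sub hs1 (by omega))

/-- `M_u = 1 + δ_{s=p-1} + (t/s)p + O(tp²)`: the p-adic valuation of
`s·M_u − s·(1+δ_{s=p-1}) − t·p` is at least `v_p(t) + 2` (with `v_p(0) = ∞`). -/
theorem stmt_1 (p : ℕ) (hp : p.Prime) (hodd : Odd p) (u t s : ℕ)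
    (hu : 1 ≤ u) (hs1 : 1 ≤ s) (hs2 : s ≤ p - 1) (hust : u = t * (p - 1) + s) :
    (t = 0 →
      (s : ℤ) * Mfun p u 0 - (s : ℤ) * (1 + if s = p - 1 then 1 else 0) - (t : ℤ) * p = 0) ∧
    (t ≠ 0 →
      ((p : ℤ) ^ (padicValNat p t + 2) ∣
        (s : ℤ) * Mfun p u 0 - (s : ℤ) * (1 + if s = p - 1 then 1 else 0) - (t : ℤ) * p)) :=
  stmt_1_general p hp hodd u t s hs1 hs2 hust
end

section
/- Let p be an odd prime, u ≥ 1 an integer, and n ≤ 0 an integer. Then M_{u,n} = ∑_{i=0}^{−n} (−1)^i · C(−n, i) · M_{u−n−i, 0}. -/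
open Finset fwdDiff

namespace Mfun

theorem eq_sum_choose_mul (p u : ℕ) (n : ℤ) :
    Mfun p u n =
      ∑ k ∈ range (u + 1), (u.choose k : ℤ) * if ((p : ℤ) - 1) ∣ ((k : ℤ) - n) then 1 else 0 := by
  simp only [Mfun, mul_boole]

theorem succ_eq_add (p u : ℕ) (n : ℤ) : Mfun p (u + 1) n = Mfun p u n + Mfun p u (n - 1) := by
  rw [eq_sum_choose_mul, eq_sum_choose_mul, eq_sum_choose_mul,
    sum_choose_succ_mul (fun k _ => if ((p : ℤ) - 1) ∣ ((k : ℤ) - n) then 1 else 0)]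
  simp only [Nat.cast_succ, sub_sub_eq_add_sub, add_sub_right_comm]

theorem sub_one_eq_fwdDiff (p : ℕ) (n : ℤ) :
    (fun u => Mfun p u (n - 1)) = Δ_[1] (fun u => Mfun p u n) := by
  ext u
  rw [fwdDiff, succ_eq_add]
  ring

theorem neg_eq_fwdDiff_iter (p m : ℕ) :
    (fun u => Mfun p u (-m)) = (Δ_[1])^[m] (fun u => Mfun p u 0) := by
  induction m with
  | zero => simp
  | succ m ih =>
    rw [Function.iterate_succ_apply', ← ih, ← sub_one_eq_fwdDiff, Nat.cast_succ, neg_add']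

theorem neg_eq_sum (p u m : ℕ) :
    Mfun p u (-m) =
      ∑ i ∈ range (m + 1), (-1 : ℤ) ^ i * (m.choose i : ℤ) * Mfun p (u + m - i) 0 := by
  rw [congrFun (neg_eq_fwdDiff_iter p m) u, fwdDiff_iter_eq_sum_shift, ← sum_range_reflect]
  refine sum_congr rfl fun j hj => ?_
  have hjm : j ≤ m := Nat.lt_succ_iff.mp (mem_range.mp hj)
  rw [Nat.add_sub_cancel, Nat.choose_symm hjm, smul_eq_mul, smul_eq_mul, mul_one,
    Nat.sub_sub_self hjm, Nat.add_sub_assoc hjm]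

end Mfun

theorem stmt_2_general (p : ℕ) (u : ℕ)
    (n : ℤ) (hn : n ≤ 0) :
    Mfun p u n =
      ∑ i ∈ Finset.range ((-n).toNat + 1),
        (-1 : ℤ) ^ i * ((-n).toNat.choose i : ℤ) * Mfun p (u + (-n).toNat - i) 0 := by
  obtain ⟨m, rfl⟩ : ∃ m : ℕ, n = -m := ⟨(-n).toNat, by omega⟩
  simpa using Mfun.neg_eq_sum p u m

/-- For `n ≤ 0`: `M_{u,n} = ∑_{i=0}^{-n} (-1)^i C(-n,i) M_{u-n-i,0}`. -/
theorem stmt_2 (p : ℕ) (hp : p.Prime) (hodd : Odd p) (u : ℕ) (hu : 1 ≤ u)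
    (n : ℤ) (hn : n ≤ 0) :
    Mfun p u n =
      ∑ i ∈ Finset.range ((-n).toNat + 1),
        (-1 : ℤ) ^ i * ((-n).toNat.choose i : ℤ) * Mfun p (u + (-n).toNat - i) 0 :=
  stmt_2_general p u n hn
end

section
/- Let p be an odd prime, u ≥ 1 an integer, and n ≥ 0 an integer. Then M_{u,n} ≡ (1 + δ) · C(⟨u⟩, ⌊n⌋) (mod p), where ⟨u⟩ is the unique element of {1,…,p−1} congruent to u mod p−1, ⌊n⌋ is the unique element of {0,…,p−2} congruent to n mod p−1, and δ = 1 if both u ≡ 0 and n ≡ 0 (mod p−1) and δ = 0 otherwise. -/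
open Finset

namespace FiniteField

variable {K : Type*} [Field K] [Fintype K]

local notation "q" => Fintype.card K

theorem intCast_card_units [DecidableEq K] : (Fintype.card Kˣ : ℤ) = q - 1 := by
  rw [Fintype.card_units, Nat.cast_sub Fintype.card_pos, Nat.cast_one]

theorem pow_eq_pow_of_modEq {a b : ℕ} (ha : a ≠ 0) (hb : b ≠ 0) (h : a ≡ b [MOD q - 1])
    (x : K) : x ^ a = x ^ b := by
  rcases eq_or_ne x 0 with rfl | hx
  · rw [zero_pow ha, zero_pow hb]
  · exact _root_.pow_eq_pow_of_modEq h (pow_card_sub_one_eq_one x hx)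

theorem units_zpow_eq_zpow_of_modEq {m n : ℤ} (h : m ≡ n [ZMOD q - 1]) (x : Kˣ) :
    (x : K) ^ m = (x : K) ^ n := by
  classical
  rw [← Units.val_zpow_eq_zpow_val, ← Units.val_zpow_eq_zpow_val, zpow_eq_zpow_iff_modEq.mpr]
  refine h.of_dvd ?_
  rw [← intCast_card_units]
  exact Int.natCast_dvd_natCast.mpr orderOf_dvd_card

theorem sum_zpow_units [DecidableEq K] (m : ℤ) :
    ∑ x : Kˣ, (x : K) ^ m = if (q : ℤ) - 1 ∣ m then -1 else 0 := by
  have hpos : 0 < (q : ℤ) - 1 := by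
    rw [← intCast_card_units]; exact_mod_cast Fintype.card_pos
  obtain ⟨i, hi⟩ := Int.eq_ofNat_of_zero_le (Int.emod_nonneg m hpos.ne')
  have hmi : m ≡ i [ZMOD q - 1] := by rw [← hi]; exact (Int.mod_modEq m _).symm
  simp_rw [units_zpow_eq_zpow_of_modEq hmi, zpow_natCast, sum_pow_units, hmi.dvd_iff]
  simp only [← intCast_card_units, Fintype.card_units, Int.natCast_dvd_natCast]

end FiniteField

theorem Int.natCast_dvd_sub_natCast_iff {c k t : ℕ} (hk : k ≤ c) (ht : t < c) :
    (c : ℤ) ∣ (k : ℤ) - t ↔ k = t ∨ k = c ∧ t = 0 := by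
  constructor
  · intro h
    rcases hk.lt_or_eq with hk | rfl
    · left
      have := Int.eq_zero_of_abs_lt_dvd h (by rw [abs_lt]; omega)
      omega
    · refine Or.inr ⟨rfl, Nat.eq_zero_of_dvd_of_lt ?_ ht⟩
      exact Int.natCast_dvd_natCast.mp ((dvd_sub_right dvd_rfl).mp h)
  · rintro (rfl | ⟨rfl, rfl⟩) <;> simp

theorem Mfun_cast_eq_neg_sum_units (p : ℕ) [Fact p.Prime] (u : ℕ) (n : ℤ) :
    (Mfun p u n : ZMod p) = -∑ x : (ZMod p)ˣ, (x : ZMod p) ^ (-n) * (1 + (x : ZMod p)) ^ u := by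
  have expand (x : (ZMod p)ˣ) : (x : ZMod p) ^ (-n) * (1 + (x : ZMod p)) ^ u =
      ∑ k ∈ range (u + 1), (u.choose k : ZMod p) * (x : ZMod p) ^ ((k : ℤ) - n) := by
    rw [add_comm, add_pow, mul_sum]
    refine sum_congr rfl fun k _ => ?_
    rw [one_pow, mul_one, sub_eq_neg_add, zpow_add₀ x.ne_zero, zpow_natCast]
    ring
  simp_rw [expand]
  rw [sum_comm]
  simp_rw [← mul_sum, FiniteField.sum_zpow_units, ZMod.card]
  rw [Mfun, ← sum_neg_distrib]
  push_cast
  refine sum_congr rfl fun k _ => ?_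
  split_ifs <;> simp

theorem Mfun_modEq_of_modEq {p u v : ℕ} {n m : ℤ} (hp : p.Prime) (hu : u ≠ 0) (hv : v ≠ 0)
    (huv : u ≡ v [MOD p - 1]) (hnm : n ≡ m [ZMOD p - 1]) : Mfun p u n ≡ Mfun p v m [ZMOD p] := by
  have := Fact.mk hp
  rw [← ZMod.intCast_eq_intCast_iff, Mfun_cast_eq_neg_sum_units, Mfun_cast_eq_neg_sum_units]
  congr 1
  refine sum_congr rfl fun x _ => ?_
  rw [FiniteField.units_zpow_eq_zpow_of_modEq (n := -m), FiniteField.pow_eq_pow_of_modEq hu hv]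
  · simpa only [ZMod.card] using huv
  · simpa only [ZMod.card] using hnm.neg

theorem Mfun_of_le {p s t : ℕ} (hs1 : 1 ≤ s) (hs2 : s ≤ p - 1) (ht : t ≤ p - 2) :
    Mfun p s t = (1 + if s = p - 1 ∧ t = 0 then 1 else 0) * (s.choose t : ℤ) := by
  have hcond (k : ℕ) (hk : k ∈ range (s + 1)) :
      ((p : ℤ) - 1 ∣ (k : ℤ) - t) ↔ k = t ∨ k = p - 1 ∧ t = 0 := by
    rw [mem_range] at hk
    have hcast : ((p - 1 : ℕ) : ℤ) = p - 1 := by omega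
    rw [← hcast, Int.natCast_dvd_sub_natCast_iff (by omega) (by omega)]
  rw [Mfun, sum_congr rfl fun k hk => if_congr (hcond k hk) rfl rfl]
  split_ifs with hδ
  · obtain ⟨hs, rfl⟩ := hδ
    simp only [and_true, ← hs]
    have hfilter : (range (s + 1)).filter (fun k => k = 0 ∨ k = s) = {0, s} := by
      ext k; simp only [mem_filter, mem_range, mem_insert, mem_singleton]; omega
    rw [← sum_filter, hfilter, sum_pair (by omega), Nat.choose_zero_right, Nat.choose_self]
    norm_num
  · have hδ' (k : ℕ) (hk : k ∈ range (s + 1)) : (k = t ∨ k = p - 1 ∧ t = 0) ↔ k = t := by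
      rw [mem_range] at hk; omega
    rw [sum_congr rfl fun k hk => if_congr (hδ' k hk) rfl rfl, sum_ite_eq']
    rcases le_or_gt t s with hts | hts
    · rw [if_pos (mem_range.mpr (by omega))]; ring
    · rw [Nat.choose_eq_zero_of_lt hts]; simp

theorem stmt_3_general (p : ℕ) (hp : p.Prime) (u : ℕ) (hu : 1 ≤ u)
    (n : ℤ) (s t : ℕ)
    (hs1 : 1 ≤ s) (hs2 : s ≤ p - 1) (hsu : s ≡ u [MOD p - 1])
    (ht1 : t ≤ p - 2) (htn : (t : ℤ) ≡ n [ZMOD (p : ℤ) - 1]) :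
    Mfun p u n ≡
      (1 + if (p - 1) ∣ u ∧ ((p : ℤ) - 1) ∣ n then 1 else 0) * (s.choose t : ℤ)
      [ZMOD (p : ℤ)] := by
  have hs : (p - 1) ∣ u ↔ s = p - 1 := by
    rw [← hsu.dvd_iff dvd_rfl]
    exact ⟨fun h => le_antisymm hs2 (Nat.le_of_dvd hs1 h), fun h => h ▸ dvd_rfl⟩
  have ht : ((p : ℤ) - 1) ∣ n ↔ t = 0 := by
    rw [← htn.dvd_iff]
    exact ⟨fun h => by exact_mod_cast Int.eq_zero_of_dvd_of_nonneg_of_lt (by omega) (by omega) h,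
      fun h => by simp [h]⟩
  calc Mfun p u n ≡ Mfun p s t [ZMOD p] :=
        Mfun_modEq_of_modEq hp (by omega) (by omega) hsu.symm htn.symm
    _ = _ := by simp_rw [Mfun_of_le hs1 hs2 ht1, hs, ht]

/-- For `n ≥ 0`: `M_{u,n} ≡ (1+δ)·C(⟨u⟩,⌊n⌋) (mod p)`, where `⟨u⟩ ∈ {1,…,p-1}` and
`⌊n⌋ ∈ {0,…,p-2}` are the representatives of `u` and `n` mod `p-1`, and `δ = 1`
iff both `u ≡ 0` and `n ≡ 0 (mod p-1)`. -/
theorem stmt_3 (p : ℕ) (hp : p.Prime) (hodd : Odd p) (u : ℕ) (hu : 1 ≤ u)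
    (n : ℤ) (hn : 0 ≤ n) (s t : ℕ)
    (hs1 : 1 ≤ s) (hs2 : s ≤ p - 1) (hsu : s ≡ u [MOD p - 1])
    (ht1 : t ≤ p - 2) (htn : (t : ℤ) ≡ n [ZMOD (p : ℤ) - 1]) :
    Mfun p u n ≡
      (1 + if (p - 1) ∣ u ∧ ((p : ℤ) - 1) ∣ n then 1 else 0) * (s.choose t : ℤ)
      [ZMOD (p : ℤ)] :=
  stmt_3_general p hp u hu n s t hs1 hs2 hsu ht1 htn
end

section
/- Let b, l, n, w, u ≥ 0 be integers with u ≥ (b+l)·n and l ≥ w. Then ∑_{j=b}^{b+l} (−1)^{j−b} · C(l, j−b) · C(u − n·j, w) = δ_{w=l} · n^l, where δ_{w=l} equals 1 if w = l and 0 otherwise. -/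
/-!
For `n * i ≤ m`, `w! * C(m - n i, w)` is the value at `i` of the polynomial
`(m - n X)(m - n X - 1)⋯(m - n X - w + 1)`, of degree at most `w` with `X ^ w`-coefficient
`(-n) ^ w`.
The alternating sum `∑ (-1)^i C(l, i) P(i)` is `(-1)^l` times the `l`-th forward difference of `P`
at `0`, which is `P.coeff l * l!` when `P` has degree at most `l`.
-/

open Finset Polynomial
open scoped Nat fwdDiff

theorem sum_range_neg_one_pow_mul_choose_smul_eq_fwdDiff_iter {M G : Type*} [AddCommMonoid M]
    [AddCommGroup G] (h : M) (f : M → G) (l : ℕ) (y : M) :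
    ∑ i ∈ range (l + 1), ((-1 : ℤ) ^ i * l.choose i) • f (y + i • h) =
      (-1 : ℤ) ^ l • Δ_[h] ^[l] f y := by
  rw [fwdDiff_iter_eq_sum_shift, smul_sum]
  refine sum_congr rfl fun i hi => ?_
  obtain ⟨k, rfl⟩ := Nat.exists_eq_add_of_le (mem_range_succ_iff.mp hi)
  rw [smul_smul, Nat.add_sub_cancel_left, ← mul_assoc, ← pow_add, add_assoc, ← two_mul, pow_add,
    pow_mul, neg_one_sq, one_pow, mul_one]

theorem Polynomial.fwdDiff_iter_eval_of_natDegree_le {R : Type*} [CommRing R] {P : R[X]} {n : ℕ}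
    (hP : P.natDegree ≤ n) (x : R) : Δ_[1] ^[n] P.eval x = P.coeff n * n ! := by
  rcases hP.lt_or_eq with hlt | rfl
  · simp [fwdDiff_iter_eq_zero_of_degree_lt hlt, coeff_eq_zero_of_natDegree_lt hlt]
  · rw [fwdDiff_iter_degree_eq_factorial]
    rfl

theorem Polynomial.sum_range_neg_one_pow_mul_choose_mul_eval {R : Type*} [CommRing R] {P : R[X]}
    {l : ℕ} (hP : P.natDegree ≤ l) :
    ∑ i ∈ range (l + 1), (-1 : R) ^ i * l.choose i * P.eval (i : R) =
      (-1) ^ l * P.coeff l * l ! := by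
  have := sum_range_neg_one_pow_mul_choose_smul_eq_fwdDiff_iter 1 P.eval l 0
  simp only [zsmul_eq_mul, nsmul_one, zero_add] at this
  push_cast at this
  rw [this, fwdDiff_iter_eval_of_natDegree_le hP, mul_assoc]

noncomputable def descFactorialPoly (m n w : ℕ) : ℤ[X] :=
  (taylor (m : ℤ) (descPochhammer ℤ w)).comp (C (-(n : ℤ)) * X)

theorem eval_descFactorialPoly {m n w i : ℕ} (h : n * i ≤ m) :
    (descFactorialPoly m n w).eval (i : ℤ) = (m - n * i).descFactorial w := by
  rw [descFactorialPoly, eval_comp, taylor_eval, eval_mul, eval_C, eval_X,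
    ← descPochhammer_eval_eq_descFactorial]
  push_cast [h]
  ring_nf

theorem natDegree_descFactorialPoly_le (m n w : ℕ) : (descFactorialPoly m n w).natDegree ≤ w := by
  refine natDegree_comp_le.trans ?_
  rw [natDegree_taylor, descPochhammer_natDegree]
  exact (Nat.mul_le_mul_left w ((natDegree_C_mul_le _ X).trans natDegree_X_le)).trans_eq
    (mul_one w)

theorem coeff_descFactorialPoly (m n w : ℕ) : (descFactorialPoly m n w).coeff w = (-n : ℤ) ^ w := by
  have hlead := coeff_taylor_natDegree (r := (m : ℤ)) (f := descPochhammer ℤ w)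
  rw [descPochhammer_natDegree, (monic_descPochhammer ℤ w).leadingCoeff] at hlead
  rw [descFactorialPoly, comp_C_mul_X_coeff, hlead, one_mul]

theorem factorial_mul_choose_eq_eval_descFactorialPoly {m n w i : ℕ} (h : n * i ≤ m) :
    (w ! : ℤ) * (m - n * i).choose w = (descFactorialPoly m n w).eval (i : ℤ) := by
  rw [eval_descFactorialPoly h, Nat.descFactorial_eq_factorial_mul_choose]
  push_cast
  rfl

/-- For `u ≥ (b+l)n` and `l ≥ w`:
`∑_{j=b}^{b+l} (-1)^{j-b} C(l, j-b) C(u-nj, w) = δ_{w=l} n^l`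
(the summation index is written as `j = b + i` with `0 ≤ i ≤ l`). -/
theorem stmt_4 (b l n w u : ℕ) (hu : (b + l) * n ≤ u) (hlw : w ≤ l) :
    ∑ i ∈ Finset.range (l + 1),
        (-1 : ℤ) ^ i * (l.choose i : ℤ) * ((u - n * (b + i)).choose w : ℤ) =
      if w = l then (n : ℤ) ^ l else 0 := by
  have hP := natDegree_descFactorialPoly_le (u - n * b) n w
  refine mul_left_cancel₀ (by positivity : (w ! : ℤ) ≠ 0) ?_
  calc (w ! : ℤ) * ∑ i ∈ range (l + 1),
        (-1 : ℤ) ^ i * (l.choose i : ℤ) * ((u - n * (b + i)).choose w : ℤ)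
      = ∑ i ∈ range (l + 1), (-1 : ℤ) ^ i * l.choose i * (descFactorialPoly (u - n * b) n w).eval
          (i : ℤ) := by
        rw [mul_sum]
        refine sum_congr rfl fun i hi => ?_
        have hi : n * i ≤ u - n * b := by
          have : n * (b + i) ≤ u := calc
            n * (b + i) ≤ n * (b + l) := by gcongr; exact mem_range_succ_iff.mp hi
            _ ≤ u := by rw [mul_comm]; exact hu
          rw [mul_add] at this
          omega
        rw [← factorial_mul_choose_eq_eval_descFactorialPoly hi, Nat.sub_sub, ← mul_add]
        ring
    _ = (-1) ^ l * (descFactorialPoly (u - n * b) n w).coeff l * l ! :=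
        sum_range_neg_one_pow_mul_choose_mul_eval (hP.trans hlw)
    _ = (w ! : ℤ) * if w = l then (n : ℤ) ^ l else 0 := by
        split_ifs with hwl
        · subst hwl
          rw [coeff_descFactorialPoly, mul_comm _ (w ! : ℤ), ← mul_pow, neg_one_mul, neg_neg]
        · rw [coeff_eq_zero_of_natDegree_lt (hP.trans_lt (lt_of_le_of_ne hlw hwl))]
          simp
end

section
/- Let t ∈ ℤ and let l, w ≥ 0 be integers. Then for every x ∈ ℚ: C(x, t+l) · C(t, w) = ∑_{v=0}^{w} (−1)^{w−v} · C(l+w−v−1, w−v) · C(x, v) · C(x−v, t+l−v). -/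
/-!
Write `t = (t + l) - l` and expand `C(t, w)` by Chu–Vandermonde into
`∑ C(t + l, v) C(-l, w - v)`. Trinomial revision
`C(x, n) C(n, v) = C(x, v) C(x - v, n - v)` (valid for every integer `n`) and upper negation
`C(-l, k) = (-1)^k C(l + k - 1, k)` then turn each summand into the stated one.
-/

/-- The descending factorial `z(z-1)⋯(z-n+1)` of a rational number. -/
def descFac (z : ℚ) (n : ℕ) : ℚ := ∏ i ∈ Finset.range n, (z - i)

/-- The generalized binomial coefficient `C(z, n)` for `z ∈ ℚ`, `n ∈ ℤ`:
`z(z-1)⋯(z-n+1)/n!` for `n ≥ 0`, and `0` for `n < 0`. -/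
def qchoose (z : ℚ) (n : ℤ) : ℚ :=
  if 0 ≤ n then descFac z n.toNat / (Nat.factorial n.toNat : ℚ) else 0

open Finset Polynomial

lemma descFac_eq_smeval (z : ℚ) (n : ℕ) :
    descFac z n = (descPochhammer ℤ n).smeval z := by
  rw [descFac, ← descPochhammer_eval_eq_prod_range, ← aeval_eq_smeval, aeval_def,
    ← descPochhammer_map (algebraMap ℤ ℚ), eval_map]

lemma qchoose_natCast (z : ℚ) (k : ℕ) : qchoose z k = Ring.choose z k := by
  rw [qchoose, if_pos k.cast_nonneg, Int.toNat_natCast, descFac_eq_smeval, Ring.choose_eq_smul,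
    smul_eq_mul, div_eq_inv_mul]

lemma qchoose_of_neg (z : ℚ) {n : ℤ} (hn : n < 0) : qchoose z n = 0 :=
  if_neg hn.not_ge

lemma qchoose_neg (z : ℚ) (k : ℕ) :
    qchoose (-z) k = (-1) ^ k * qchoose (z + k - 1) k := by
  rw [qchoose_natCast, qchoose_natCast, Ring.choose_neg, Units.smul_def, zsmul_eq_mul,
    Int.cast_negOnePow_natCast]

lemma qchoose_add (a b : ℚ) (w : ℕ) :
    qchoose (a + b) w = ∑ v ∈ range (w + 1), qchoose a v * qchoose b (w - v : ℕ) := by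
  simp only [qchoose_natCast]
  rw [Ring.add_choose_eq w (Commute.all a b), Nat.sum_antidiagonal_eq_sum_range_succ_mk]

lemma qchoose_mul_qchoose_sub (x : ℚ) (n : ℤ) (v : ℕ) :
    qchoose x v * qchoose (x - v) (n - v) = qchoose x n * qchoose n v := by
  rcases lt_or_ge n 0 with hn | hn
  · rw [qchoose_of_neg x hn, qchoose_of_neg (x - v) (by omega), mul_zero, zero_mul]
  lift n to ℕ using hn
  rcases le_or_gt v n with hvn | hnv
  · simp only [← Nat.cast_sub hvn, Int.cast_natCast, qchoose_natCast, Ring.choose_natCast]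
    rw [← Ring.choose_smul_choose x hvn, nsmul_eq_mul, mul_comm]
  · rw [qchoose_of_neg (x - v) (by omega), Int.cast_natCast, qchoose_natCast (n : ℚ),
      Ring.choose_natCast, Nat.choose_eq_zero_of_lt hnv, Nat.cast_zero, mul_zero, mul_zero]

/-- `C(x, t+l)·C(t, w) = ∑_{v=0}^{w} (-1)^{w-v} C(l+w-v-1, w-v) C(x, v) C(x-v, t+l-v)`. -/
theorem stmt_5 (t : ℤ) (l w : ℕ) (x : ℚ) :
    qchoose x (t + l) * qchoose (t : ℚ) (w : ℤ) =
      ∑ v ∈ Finset.range (w + 1),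
        (-1 : ℚ) ^ (w - v) * qchoose ((l : ℚ) + w - v - 1) ((w : ℤ) - v) *
          qchoose x (v : ℤ) * qchoose (x - v) (t + l - v) := by
  have ht : (t : ℚ) = ((t + l : ℤ) : ℚ) + -(l : ℚ) := by push_cast; ring
  rw [ht, qchoose_add, mul_sum]
  refine sum_congr rfl fun v hv => ?_
  obtain ⟨k, rfl⟩ : ∃ k, w = v + k :=
    Nat.exists_eq_add_of_le (Nat.lt_succ_iff.mp (mem_range.mp hv))
  have hk : ((v + k : ℕ) : ℤ) - v = k := by push_cast; ring
  have hl : (l : ℚ) + (v + k : ℕ) - v - 1 = l + k - 1 := by push_cast; ring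
  rw [hk, hl, Nat.add_sub_cancel_left, qchoose_neg, ← mul_assoc, ← qchoose_mul_qchoose_sub]
  ring
end

section
/- Let i, u, v ≥ 0 be integers. Then ∑_{l=0}^{u+v} (−1)^l · C(l, i) · C(u, l−v) = (−1)^{u+v} · C(v, u+v−i). -/
open Finset
open scoped fwdDiff

lemma descFac_eq_descPochhammer_eval (z : ℚ) (n : ℕ) :
    descFac z n = (descPochhammer ℚ n).eval z :=
  (descPochhammer_eval_eq_prod_range n z).symm

lemma qchoose_natCast_natCast (a k : ℕ) : qchoose a k = a.choose k := by
  simp [qchoose, descFac_eq_descPochhammer_eval, Nat.cast_choose_eq_descPochhammer_div]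

lemma qchoose_of_neg_s10 (z : ℚ) {m : ℤ} (hm : m < 0) : qchoose z m = 0 :=
  if_neg hm.not_ge

lemma qchoose_natCast_add_sub (u v i : ℕ) :
    qchoose v ((u : ℤ) + v - i) = if u ≤ i then (v.choose (i - u) : ℚ) else 0 := by
  split_ifs with hui
  · rcases le_or_gt (i - u) v with hv | hv
    · rw [show (u : ℤ) + v - i = ((v - (i - u) : ℕ) : ℤ) by omega, qchoose_natCast_natCast,
        Nat.choose_symm hv]
    · rw [qchoose_of_neg_s10 _ (by omega), Nat.choose_eq_zero_of_lt hv, Nat.cast_zero]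
  · rw [show (u : ℤ) + v - i = ((u + v - i : ℕ) : ℤ) by omega, qchoose_natCast_natCast,
      Nat.choose_eq_zero_of_lt (by omega), Nat.cast_zero]

lemma fwdDiff_iter_choose_eq_ite (i u : ℕ) :
    Δ_[1] ^[u] (fun x ↦ x.choose i : ℕ → ℤ) =
      fun x ↦ if u ≤ i then (x.choose (i - u) : ℤ) else 0 := by
  rcases le_or_gt u i with hui | hiu
  · obtain ⟨j, rfl⟩ := Nat.exists_eq_add_of_le hui
    simp [fwdDiff_iter_choose]
  · obtain ⟨k, rfl⟩ := Nat.exists_eq_add_of_lt hiu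
    have hconst : Δ_[1] ^[i] (fun x ↦ x.choose i : ℕ → ℤ) = fun _ ↦ 1 := by
      simpa using fwdDiff_iter_choose 0 i
    have hzero : ∀ n, Δ_[1] ^[n] (fun _ ↦ 0 : ℕ → ℤ) = fun _ ↦ 0 := fun n ↦ by
      ext x; simp [fwdDiff_iter_eq_sum_shift]
    rw [show i + k + 1 = k + (1 + i) by ring, Function.iterate_add_apply,
      Function.iterate_add_apply, hconst, Function.iterate_one, fwdDiff_const, hzero]
    simp [show ¬ k + (1 + i) ≤ i by omega]

lemma sum_range_neg_one_pow_mul_choose_mul_choose_add (u v i : ℕ) :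
    ∑ k ∈ range (u + 1), (-1 : ℤ) ^ (u - k) * u.choose k * (v + k).choose i =
      if u ≤ i then (v.choose (i - u) : ℤ) else 0 := by
  have := congr_fun (fwdDiff_iter_choose_eq_ite i u) v
  simpa [fwdDiff_iter_eq_sum_shift] using this

/-- `∑_{l=0}^{u+v} (-1)^l C(l, i) C(u, l-v) = (-1)^{u+v} C(v, u+v-i)`. -/
theorem stmt_10 (i u v : ℕ) :
    ∑ l ∈ Finset.range (u + v + 1),
        (-1 : ℚ) ^ l * (l.choose i : ℚ) * qchoose (u : ℚ) ((l : ℤ) - v) =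
      (-1 : ℚ) ^ (u + v) * qchoose (v : ℚ) ((u : ℤ) + v - i) := by
  have hsign : ∀ k ∈ range (u + 1), (-1 : ℚ) ^ (v + k) = (-1) ^ (u + v) * (-1) ^ (u - k) := by
    intro k hk
    have hku := mem_range.1 hk
    rw [← pow_add, show u + v + (u - k) = v + k + 2 * (u - k) by omega, pow_add _ (v + k),
      pow_mul, neg_one_sq, one_pow, mul_one]
  have hlow : ∀ l ∈ range v, (-1 : ℚ) ^ l * (l.choose i : ℚ) * qchoose u ((l : ℤ) - v) = 0 :=
    fun l hl ↦ by rw [qchoose_of_neg_s10 _ (by have := mem_range.1 hl; omega), mul_zero]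
  rw [show u + v + 1 = v + (u + 1) by ring, sum_range_add, sum_eq_zero hlow, zero_add]
  calc ∑ k ∈ range (u + 1),
          (-1 : ℚ) ^ (v + k) * ((v + k).choose i : ℚ) * qchoose u ((v + k : ℕ) - v)
      = (-1) ^ (u + v) *
          ∑ k ∈ range (u + 1), (-1 : ℚ) ^ (u - k) * u.choose k * (v + k).choose i := by
        rw [mul_sum]
        refine sum_congr rfl fun k hk ↦ ?_
        rw [hsign k hk, show ((v + k : ℕ) : ℤ) - v = k by omega, qchoose_natCast_natCast]
        ring
    _ = (-1) ^ (u + v) * qchoose v ((u : ℤ) + v - i) := by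
        rw [qchoose_natCast_add_sub]
        exact_mod_cast congrArg _ (sum_range_neg_one_pow_mul_choose_mul_choose_add u v i)
end

section
/- For all integers w, m, u ≥ 0: ∑_{j=0}^{m} ∑_{l=1}^{j+1} (−1)^{m+l−1} · C(m, j) · C(j, l−1) · C(w+l−1, w) · C(l+u−1, j) = C(m+u, u) · C(w, m). -/
/-!
After the substitution `l = k + 1` and an exchange of the two sums, the sum over `j` is evaluated
by `C(m,j) C(j,k) = C(m,k) C(m-k,m-j)` and Vandermonde: it equals `C(m,k) C(m+u,u)`. What remains
is `C(m+u,u)` times `∑ₖ (-1)^(m+k) C(m,k) C(w+k,w)`, the `m`-th forward difference of `x ↦ C(x,w)`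
at `x = w`, which is `C(w,w-m) = C(w,m)` for `m ≤ w` and `0` otherwise.
-/

open Finset
open scoped fwdDiff

theorem Finset.sum_Icc_one_eq_sum_range {M : Type*} [AddCommMonoid M] (f : ℕ → M) (n : ℕ) :
    ∑ l ∈ Icc 1 n, f l = ∑ k ∈ range n, f (k + 1) := by
  rw [range_eq_Ico, sum_Ico_add' f, ← Ico_add_one_right_eq_Icc]

namespace Nat

theorem choose_mul_eq_choose_mul_choose_sub_sub {m j k : ℕ} (hj : j ≤ m) :
    m.choose j * j.choose k = m.choose k * (m - k).choose (m - j) := by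
  rcases le_or_gt k j with hkj | hjk
  · rw [choose_mul hkj, ← choose_symm (Nat.sub_le_sub_right hj k),
      show m - k - (j - k) = m - j by omega]
  · rcases le_or_gt k m with hkm | hmk
    · rw [choose_eq_zero_of_lt hjk, choose_eq_zero_of_lt (by omega : m - k < m - j), mul_zero,
        mul_zero]
    · rw [choose_eq_zero_of_lt hjk, choose_eq_zero_of_lt hmk, mul_zero, zero_mul]

theorem sum_range_choose_mul_choose_sub (a b n : ℕ) :
    ∑ j ∈ range (n + 1), a.choose j * b.choose (n - j) = (a + b).choose n := by
  rw [add_choose_eq, Nat.sum_antidiagonal_eq_sum_range_succ (fun i j => a.choose i * b.choose j)]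

theorem sum_range_choose_mul_choose_mul_choose {m k : ℕ} (u : ℕ) (hk : k ≤ m) :
    ∑ j ∈ range (m + 1), m.choose j * j.choose k * (k + u).choose j
      = m.choose k * (m + u).choose u := by
  calc ∑ j ∈ range (m + 1), m.choose j * j.choose k * (k + u).choose j
      = m.choose k * ∑ j ∈ range (m + 1), (k + u).choose j * (m - k).choose (m - j) := by
        rw [mul_sum]
        refine sum_congr rfl fun j hj => ?_
        rw [choose_mul_eq_choose_mul_choose_sub_sub (mem_range_succ_iff.1 hj)]
        ring
    _ = m.choose k * (m + u).choose u := by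
        rw [sum_range_choose_mul_choose_sub, show k + u + (m - k) = m + u by omega,
          choose_symm_add]

end Nat

theorem fwdDiff_iter_choose_apply_self (w m : ℕ) :
    Δ_[1] ^[m] (fun x ↦ x.choose w : ℕ → ℤ) w = w.choose m := by
  rcases le_or_gt m w with hmw | hwm
  · obtain ⟨j, rfl⟩ := Nat.exists_eq_add_of_le hmw
    rw [fwdDiff_iter_choose, Nat.choose_symm_add]
  · obtain ⟨t, rfl⟩ := Nat.exists_eq_add_of_lt hwm
    have hconst : Δ_[1] ^[w] (fun x ↦ x.choose w : ℕ → ℤ) = fun _ ↦ 1 := by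
      simpa using fwdDiff_iter_choose 0 w
    rw [Nat.choose_eq_zero_of_lt hwm, add_assoc, add_comm, Function.iterate_add_apply, hconst,
      Function.iterate_succ_apply, fwdDiff_const]
    simp [fwdDiff_iter_eq_sum_shift]

theorem sum_range_neg_one_pow_mul_choose_mul_add_choose (w m : ℕ) :
    ∑ k ∈ range (m + 1), (-1 : ℤ) ^ (m + k) * m.choose k * (w + k).choose w = w.choose m := by
  rw [← fwdDiff_iter_choose_apply_self, fwdDiff_iter_eq_sum_shift]
  refine sum_congr rfl fun k hk => ?_
  have hkm := mem_range_succ_iff.1 hk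
  rw [smul_eq_mul, smul_eq_mul, mul_one, show m + k = m - k + 2 * k by omega, pow_add, pow_mul]
  simp

/-- `∑_{j=0}^{m} ∑_{l=1}^{j+1} (-1)^{m+l-1} C(m,j) C(j,l-1) C(w+l-1,w) C(l+u-1,j)
  = C(m+u,u) C(w,m)`. -/
theorem stmt_15 (w m u : ℕ) :
    ∑ j ∈ Finset.range (m + 1), ∑ l ∈ Finset.Icc 1 (j + 1),
        (-1 : ℤ) ^ (m + l - 1) * (m.choose j : ℤ) * (j.choose (l - 1) : ℤ) *
          ((w + l - 1).choose w : ℤ) * ((l + u - 1).choose j : ℤ) =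
      ((m + u).choose u : ℤ) * (w.choose m : ℤ) := by
  calc _ = ∑ j ∈ range (m + 1), ∑ k ∈ range (m + 1), (-1 : ℤ) ^ (m + k) * (w + k).choose w *
            (m.choose j * j.choose k * (k + u).choose j : ℕ) := by
        refine sum_congr rfl fun j hj => ?_
        rw [sum_Icc_one_eq_sum_range, ← sum_subset (range_subset_range.2 (mem_range.1 hj))]
        · refine sum_congr rfl fun k _ => ?_
          simp only [Nat.add_sub_cancel, Nat.add_succ_sub_one, Nat.add_right_comm k 1 u]
          push_cast
          ring
        · intro k _ hk
          rw [mem_range, not_lt] at hk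
          rw [Nat.choose_eq_zero_of_lt hk]
          simp
    _ = ∑ k ∈ range (m + 1), (-1 : ℤ) ^ (m + k) * (w + k).choose w *
            (m.choose k * (m + u).choose u : ℕ) := by
        rw [sum_comm]
        refine sum_congr rfl fun k hk => ?_
        rw [← mul_sum, ← Nat.cast_sum,
          Nat.sum_range_choose_mul_choose_mul_choose u (mem_range_succ_iff.1 hk)]
    _ = _ := by
        rw [← sum_range_neg_one_pow_mul_choose_mul_add_choose w m, mul_sum]
        refine sum_congr rfl fun k _ => ?_
        push_cast
        ring
end

section
/- Let β and j be integers with 0 ≤ β < j. Then ∑_{w=1}^{j} (1/w) · C(β−w, j−w) = (−1)^{β+j+1} / ( (β+1) · C(j, β+1) ), an identity of rational numbers, where C(β−w, j−w) is the generalized binomial coefficient with (possibly negative) integer top. -/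
open Finset Nat fwdDiff

lemma descFac_natCast_of_lt {k n : ℕ} (h : k < n) : descFac k n = 0 :=
  prod_eq_zero (mem_range.2 h) (sub_self _)

lemma descFac_neg_succ (a n : ℕ) : descFac (-(a + 1)) n = (-1) ^ n * (a + 1).ascFactorial n := by
  have hneg := prod_neg (s := range n) fun i : ℕ => (a : ℚ) + 1 + i
  rw [card_range] at hneg
  rw [descFac, ascFactorial_eq_prod_range]
  push_cast
  rw [← hneg]
  exact prod_congr rfl fun i _ => by ring

lemma qchoose_natCast_s17 (z : ℚ) (n : ℕ) : qchoose z n = descFac z n / n ! := by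
  simp [qchoose]

lemma qchoose_natCast_of_lt {k : ℕ} {n : ℤ} (h : k < n) : qchoose k n = 0 := by
  lift n to ℕ using by omega
  rw [qchoose_natCast_s17, descFac_natCast_of_lt (by exact_mod_cast h), zero_div]

lemma qchoose_neg_succ (a n : ℕ) : qchoose (-(a + 1)) n = (-1) ^ n * (a + n).choose n := by
  rw [qchoose_natCast_s17, descFac_neg_succ, ascFactorial_eq_factorial_mul_choose]
  have : (n ! : ℚ) ≠ 0 := by positivity
  push_cast
  field_simp

lemma fwdDiff_iter_inv_succ (m b : ℕ) :
    Δ_[1] ^[m] (fun n : ℕ => ((n : ℚ) + 1)⁻¹) b = (-1) ^ m * m ! * b ! / (b + m + 1)! := by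
  induction m generalizing b with
  | zero => simp [Nat.factorial_succ]; field_simp
  | succ m ih =>
    rw [Function.iterate_succ_apply', fwdDiff, ih, ih, show b + 1 + m + 1 = b + m + 1 + 1 by omega,
      show b + (m + 1) + 1 = b + m + 1 + 1 by omega]
    simp only [Nat.factorial_succ]
    push_cast
    field_simp
    ring

lemma sum_alternating_choose_div_add_succ (m b : ℕ) :
    ∑ k ∈ range (m + 1), (-1 : ℚ) ^ (m - k) * m.choose k / (b + k + 1) =
      (-1) ^ m * m ! * b ! / (b + m + 1)! := by
  rw [← fwdDiff_iter_inv_succ, fwdDiff_iter_eq_sum_shift]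
  refine sum_congr rfl fun k _ => ?_
  simp [div_eq_mul_inv]

/-- For `0 ≤ β < j`:
`∑_{w=1}^{j} (1/w) C(β-w, j-w) = (-1)^{β+j+1}/((β+1) C(j, β+1))`. -/
theorem stmt_17 (β j : ℕ) (hβj : β < j) :
    ∑ w ∈ Finset.Icc 1 j, (1 / (w : ℚ)) * qchoose ((β : ℚ) - w) ((j : ℤ) - w) =
      (-1 : ℚ) ^ (β + j + 1) / (((β : ℚ) + 1) * (j.choose (β + 1) : ℚ)) := by
  obtain ⟨m, rfl⟩ : ∃ m, j = β + m + 1 := ⟨j - β - 1, by omega⟩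
  have below : ∀ w ∈ Ico 1 (β + 1),
      1 / (w : ℚ) * qchoose ((β : ℚ) - w) (((β + m + 1 : ℕ) : ℤ) - w) = 0 := by
    intro w hw
    have hwβ : w ≤ β := by rw [mem_Ico] at hw; omega
    rw [← Nat.cast_sub hwβ, qchoose_natCast_of_lt (by omega), mul_zero]
  have above : ∀ k ∈ range (m + 1),
      1 / ((β + 1 + k : ℕ) : ℚ) * qchoose ((β : ℚ) - (β + 1 + k : ℕ))
        (((β + m + 1 : ℕ) : ℤ) - (β + 1 + k : ℕ)) =
        (-1) ^ (m - k) * m.choose k / (β + k + 1) := by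
    intro k hk
    have hkm : k ≤ m := by rw [mem_range] at hk; omega
    have hz : (β : ℚ) - (β + 1 + k : ℕ) = -(k + 1) := by push_cast; ring
    have hn : ((β + m + 1 : ℕ) : ℤ) - (β + 1 + k : ℕ) = (m - k : ℕ) := by omega
    rw [hz, hn, qchoose_neg_succ, Nat.add_sub_cancel' hkm, Nat.choose_symm hkm]
    push_cast
    ring
  rw [← Ico_add_one_right_eq_Icc, ← sum_Ico_consecutive _ (by omega : 1 ≤ β + 1) (by omega),
    sum_eq_zero below, zero_add, sum_Ico_eq_sum_range,
    show β + m + 1 + 1 - (β + 1) = m + 1 by omega, sum_congr rfl above,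
    sum_alternating_choose_div_add_succ,
    Nat.cast_choose ℚ (by omega : β + 1 ≤ β + m + 1), show β + m + 1 - (β + 1) = m by omega,
    show β + (β + m + 1) + 1 = m + 2 * (β + 1) by omega, pow_add, pow_mul, Nat.factorial_succ β]
  push_cast
  field_simp
  ring
end
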